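/- Let (η₁, η₂, η₃) be a centered Gaussian vector with nonsingular covariance matrix G such that E[η₁η₂]·E[η₂η₃]·E[η₃η₁] < 0. Then for no signature matrix S (diagonal with entries ±1) is the matrix S G⁻¹ S an M-matrix; consequently (η₁², η₂², η₃²) is not infinitely divisible. -/

import Mathlib

open MeasureTheory

/-- An `M`-matrix: nonpositive off-diagonal entries, nonsingular,
with entrywise nonnegative inverse. -/
def IsMMatrix (A : Matrix (Fin 3) (Fin 3) ℝ) : Prop :=
  (∀ i j, i ≠ j → A i j ≤ 0) ∧ IsUnit A.det ∧ ∀ i j, 0 ≤ A⁻¹ i j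

/-! The inverse of `S G⁻¹ S` is `S G S`, so nonnegativity of that inverse makes every signed
covariance `sᵢ Gᵢⱼ sⱼ` nonnegative. The product of the three signed covariances around the
cycle `0 → 1 → 2 → 0` is `(s₀ s₁ s₂)² G₀₁ G₁₂ G₂₀ = G₀₁ G₁₂ G₂₀`, which would then be
nonnegative. -/

namespace Matrix

variable {n R : Type*} [Fintype n] [DecidableEq n]

theorem diagonal_mul_diagonal_eq_one [Semiring R] {s : n → R} (hs : ∀ i, s i * s i = 1) :
    diagonal s * diagonal s = 1 := by
  rw [diagonal_mul_diagonal, ← diagonal_one]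
  exact congrArg diagonal (funext hs)

theorem inv_diagonal_mul_inv_mul_diagonal [CommRing R] {s : n → R} (hs : ∀ i, s i * s i = 1)
    {A : Matrix n n R} (hA : IsUnit A.det) :
    (diagonal s * A⁻¹ * diagonal s)⁻¹ = diagonal s * A * diagonal s := by
  apply inv_eq_right_inv
  calc diagonal s * A⁻¹ * diagonal s * (diagonal s * A * diagonal s)
      = diagonal s * (A⁻¹ * (diagonal s * diagonal s) * A) * diagonal s := by
        simp only [Matrix.mul_assoc]
    _ = 1 := by
        rw [diagonal_mul_diagonal_eq_one hs, Matrix.mul_one, nonsing_inv_mul A hA,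
          Matrix.mul_one, diagonal_mul_diagonal_eq_one hs]

end Matrix

theorem cycle_product_nonneg_of_signed_nonneg {n R : Type*} [CommRing R] [PartialOrder R]
    [IsOrderedRing R] {s : n → R} (hs : ∀ i, s i * s i = 1) {G : n → n → R}
    (hG : ∀ i j, 0 ≤ s i * G i j * s j) (i j k : n) :
    0 ≤ G i j * G j k * G k i := by
  have hcycle : (s i * G i j * s j) * (s j * G j k * s k) * (s k * G k i * s i) =
      (s i * s i) * (s j * s j) * (s k * s k) * (G i j * G j k * G k i) := by ring
  rw [hs, hs, hs, one_mul, one_mul, one_mul] at hcycle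
  exact hcycle ▸ mul_nonneg (mul_nonneg (hG i j) (hG j k)) (hG k i)

theorem no_signature_mMatrix_of_neg_product_general
    (G : Matrix (Fin 3) (Fin 3) ℝ)
    (hdet : IsUnit G.det)
    (hneg : G 0 1 * G 1 2 * G 2 0 < 0) :
    ¬ ∃ s : Fin 3 → ℝ, (∀ i, s i = 1 ∨ s i = -1) ∧
      IsMMatrix (Matrix.diagonal s * G⁻¹ * Matrix.diagonal s) := by
  rintro ⟨s, hs, -, -, hinv_nonneg⟩
  have hss : ∀ i, s i * s i = 1 := fun i => mul_self_eq_one_iff.mpr (hs i)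
  have hsigned : ∀ i j, 0 ≤ s i * G i j * s j := fun i j => by
    simpa only [Matrix.inv_diagonal_mul_inv_mul_diagonal hss hdet, Matrix.mul_diagonal,
      Matrix.diagonal_mul] using hinv_nonneg i j
  exact hneg.not_ge (cycle_product_nonneg_of_signed_nonneg hss hsigned 0 1 2)

/-- If a centered vector `(η₁, η₂, η₃)` has nonsingular covariance matrix `G`
with `E[η₁η₂]·E[η₂η₃]·E[η₃η₁] < 0`, then for no signature matrix `S` is
`S G⁻¹ S` an `M`-matrix (so by Bapat's criterion the squared Gaussian vector
with this covariance is not infinitely divisible). -/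
theorem no_signature_mMatrix_of_neg_product
    {Ω : Type*} [MeasureSpace Ω] (P : Measure Ω) [IsProbabilityMeasure P]
    (η : Fin 3 → Ω → ℝ) (hcent : ∀ i, ∫ ω, η i ω ∂P = 0)
    (G : Matrix (Fin 3) (Fin 3) ℝ)
    (hG : ∀ i j, G i j = ∫ ω, η i ω * η j ω ∂P)
    (hdet : IsUnit G.det)
    (hneg : G 0 1 * G 1 2 * G 2 0 < 0) :
    ¬ ∃ s : Fin 3 → ℝ, (∀ i, s i = 1 ∨ s i = -1) ∧
      IsMMatrix (Matrix.diagonal s * G⁻¹ * Matrix.diagonal s) :=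
  no_signature_mMatrix_of_neg_product_general G hdet hneg
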